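/- The free convolutional code of length 2 and rank 1 over ℤ/4 generated by the row matrix (1+D, 3+D) is catastrophic: every full-row-rank 1 × 2 polynomial matrix over (ℤ/4)[D] whose row span over the Laurent series ring (ℤ/4)((D)) equals this code admits an input Laurent series u ∈ (ℤ/4)((D)) of infinite Hamming weight such that u·(g₁, g₂) has finite Hamming weight. -/

import Mathlib

open Polynomial Matrix

/-- The natural ring homomorphism from polynomials over a commutative ring to Laurent series. -/
noncomputable def polyToLS (R : Type*) [CommRing R] : Polynomial R →+* LaurentSeries R :=
  (HahnSeries.ofPowerSeries ℤ R).comp Polynomial.coeToPowerSeries.ringHom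

/-- The `k × k` minor of a `k × n` matrix determined by a choice of columns. -/
noncomputable def minorOn {R : Type*} [CommRing R] {k n : ℕ}
    (G : Matrix (Fin k) (Fin n) R) (c : Fin k → Fin n) : R :=
  (G.submatrix id c).det

/-- A polynomial matrix has full row rank if some maximal minor is a non-zero-divisor. -/
def FullRowRank {R : Type*} [CommRing R] {k n : ℕ}
    (G : Matrix (Fin k) (Fin n) (Polynomial R)) : Prop :=
  ∃ c : Fin k → Fin n, minorOn G c ∈ nonZeroDivisors (Polynomial R)

/-- The free convolutional code (row span over the Laurent series ring) generated by `G`. -/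
noncomputable def code {R : Type*} [CommRing R] {k n : ℕ}
    (G : Matrix (Fin k) (Fin n) (Polynomial R)) : Set (Fin n → LaurentSeries R) :=
  {v | ∃ u : Fin k → LaurentSeries R, v = Matrix.vecMul u (G.map (polyToLS R))}

/-- The internal degree of a polynomial matrix: the maximal degree of its maximal minors. -/
noncomputable def intdeg {R : Type*} [CommRing R] {k n : ℕ}
    (G : Matrix (Fin k) (Fin n) (Polynomial R)) : WithBot ℕ :=
  Finset.univ.sup fun c : Fin k → Fin n => (minorOn G c).degree

/-- Coefficientwise/entrywise reduction modulo `p` of a matrix over `(ℤ/p^r)[D]`. -/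
noncomputable def reduceMod (p r : ℕ) (hr : r ≠ 0) {k n : ℕ}
    (G : Matrix (Fin k) (Fin n) (Polynomial (ZMod (p ^ r)))) :
    Matrix (Fin k) (Fin n) (Polynomial (ZMod p)) :=
  G.map (Polynomial.map (ZMod.castHom (dvd_pow_self p hr) (ZMod p)))

/-- The monic greatest common divisor in `𝔽_p[D]` of the maximal minors of a matrix. -/
noncomputable def gcdMinors {p : ℕ} [Fact p.Prime] {k n : ℕ}
    (G : Matrix (Fin k) (Fin n) (Polynomial (ZMod p))) : Polynomial (ZMod p) :=
  Finset.univ.gcd fun c : Fin k → Fin n => minorOn G c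

/-- A vector of Laurent series has finite Hamming weight iff each component has
finitely many nonzero coefficients. -/
def FiniteWeight {R : Type*} [CommRing R] {m : ℕ} (v : Fin m → LaurentSeries R) : Prop :=
  ∀ i, (v i).support.Finite

/-- A polynomial generator matrix is non-catastrophic if every input whose output has finite
Hamming weight itself has finite Hamming weight. -/
noncomputable def NonCatastrophic {R : Type*} [CommRing R] {k n : ℕ}
    (G : Matrix (Fin k) (Fin n) (Polynomial R)) : Prop :=
  ∀ u : Fin k → LaurentSeries R,
    FiniteWeight (Matrix.vecMul u (G.map (polyToLS R))) → FiniteWeight u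

/-- The dual of a set of words: all vectors orthogonal to every word. -/
def dualCode {R : Type*} [CommRing R] {n : ℕ}
    (C : Set (Fin n → LaurentSeries R)) : Set (Fin n → LaurentSeries R) :=
  {v | ∀ w ∈ C, ∑ i, v i * w i = 0}

/-!
The series `w = 2·(1 + D + D² + ⋯)` satisfies `w·(1 + D) = w·(3 + D) = 2`, so `(2, 2)` lies in the
code and `u·g = (2, 2)` for some input `u`; this `u` has infinite weight. Indeed, if `u` had finite
weight, reduce modulo 2: full row rank makes `ḡ ≠ 0`, so `ū = 0`, i.e. `u = 2x`, and `x̄·ḡ₀ = 1`.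
Writing `g = t·(1 + D, 3 + D)`, the series `2t = g₁ - g₀` is a polynomial, so `t̄` has finite weight,
and `ḡ₀ = t̄·(1 + D)`. Then `x̄·t̄` would be a finite-weight inverse of `1 + D` in `𝔽₂((D))`, whereas
that inverse is `1 + D + D² + ⋯`.
-/

namespace HahnSeries

variable {Γ R S : Type*} [PartialOrder Γ] [AddCommMonoid Γ] [IsOrderedCancelAddMonoid Γ]
  [Semiring R] [Semiring S]

def mapRingHom (f : R →+* S) : R⟦Γ⟧ →+* S⟦Γ⟧ where
  toFun x := x.map f
  map_one' := HahnSeries.map_one f.toMonoidWithZeroHom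
  map_mul' _ _ := HahnSeries.map_mul f.toNonUnitalRingHom
  map_zero' := HahnSeries.map_zero (f : ZeroHom R S)
  map_add' _ _ := by ext; simp

@[simp]
theorem coeff_mapRingHom (f : R →+* S) (x : R⟦Γ⟧) (a : Γ) :
    (mapRingHom f x).coeff a = f (x.coeff a) :=
  rfl

end HahnSeries

section PolyToLS

variable {R : Type*} [CommRing R]

theorem polyToLS_apply (p : R[X]) : polyToLS R p = HahnSeries.ofPowerSeries ℤ R p := rfl

theorem polyToLS_injective : Function.Injective (polyToLS R) :=
  Polynomial.algebraMap_hahnSeries_injective ℤ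

theorem support_polyToLS_finite (p : R[X]) : (polyToLS R p).support.Finite := by
  refine (p.support.finite_toSet.image _).subset
    (HahnSeries.support_embDomain_subset.trans (Set.image_mono fun n hn => ?_))
  simpa [HahnSeries.coeff_toPowerSeries_symm] using hn

theorem mapRingHom_polyToLS {S : Type*} [CommRing S] (f : R →+* S) (p : R[X]) :
    HahnSeries.mapRingHom f (polyToLS R p) = polyToLS S (p.map f) := by
  have : (HahnSeries.mapRingHom f).comp (polyToLS R) = (polyToLS S).comp (mapRingHom f) := by
    ext <;> simp [polyToLS_apply, HahnSeries.coeff_single, apply_ite f]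
  exact RingHom.congr_fun this p

end PolyToLS

section Geometric

variable (R : Type*) [CommRing R]

noncomputable def geomSeries : LaurentSeries R :=
  HahnSeries.ofPowerSeries ℤ R (PowerSeries.mk 1)

theorem geomSeries_mul_one_sub_X : geomSeries R * polyToLS R (1 - X) = 1 := by
  rw [geomSeries, polyToLS_apply, ← map_mul, Polynomial.coe_sub, Polynomial.coe_one,
    Polynomial.coe_X, PowerSeries.mk_one_mul_one_sub_eq_one, map_one]

theorem support_geomSeries_infinite [Nontrivial R] : (geomSeries R).support.Infinite :=
  (Set.infinite_range_of_injective Nat.cast_injective).mono <| Set.range_subset_iff.2 fun n => by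
    simp [geomSeries, HahnSeries.ofPowerSeries_apply_coeff]

variable {R}

theorem support_infinite_of_mul_one_sub_X_eq_one [Nontrivial R] {a : LaurentSeries R}
    (h : a * polyToLS R (1 - X) = 1) : a.support.Infinite := by
  have : a = geomSeries R := by
    rw [← mul_one a, ← geomSeries_mul_one_sub_X, mul_left_comm, h, mul_one]
  exact this ▸ support_geomSeries_infinite R

theorem two_mul_geomSeries_mul_polyToLS {p : R[X]} (hp : 2 * p = 2 * (1 - X)) :
    2 * geomSeries R * polyToLS R p = 2 := by
  calc 2 * geomSeries R * polyToLS R p = geomSeries R * polyToLS R (2 * p) := by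
        rw [map_mul, map_ofNat]; ring
    _ = 2 := by rw [hp, map_mul, map_ofNat, mul_left_comm, geomSeries_mul_one_sub_X, mul_one]

end Geometric

section RowCode

variable {R : Type*} [CommRing R] {n : ℕ}

theorem mem_code_fin_one_iff {g : Matrix (Fin 1) (Fin n) R[X]} {v : Fin n → LaurentSeries R} :
    v ∈ code g ↔ ∃ u : LaurentSeries R, ∀ j, u * polyToLS R (g 0 j) = v j := by
  simp only [code, Set.mem_ofPred_eq, funext_iff, vecMul, dotProduct, Fin.sum_univ_one, map_apply]
  constructor
  · rintro ⟨u, hu⟩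
    exact ⟨u 0, fun j => (hu j).symm⟩
  · rintro ⟨u, hu⟩
    exact ⟨fun _ => u, fun j => (hu j).symm⟩

theorem minorOn_fin_one (g : Matrix (Fin 1) (Fin n) R) (c : Fin 1 → Fin n) :
    minorOn g c = g 0 (c 0) :=
  det_fin_one _

end RowCode

theorem mem_code_one_add_X_three_add_X {v : Fin 2 → LaurentSeries (ZMod 4)} :
    v ∈ code !![1 + X, 3 + X] ↔
      ∃ t, t * polyToLS _ (1 + X) = v 0 ∧ t * polyToLS _ (3 + X) = v 1 := by
  simp only [mem_code_fin_one_iff, Fin.forall_fin_two, of_apply, cons_val_zero, cons_val_one,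
    cons_val_fin_one]

section ReductionModTwo

noncomputable abbrev reduceModTwo : LaurentSeries (ZMod 4) →+* LaurentSeries (ZMod 2) :=
  HahnSeries.mapRingHom (ZMod.castHom (by norm_num) (ZMod 2))

theorem coeff_two_mul {R : Type*} [Semiring R] (a : LaurentSeries R) (n : ℤ) :
    (2 * a).coeff n = 2 * a.coeff n := by
  rw [two_mul, HahnSeries.coeff_add, two_mul]

theorem two_mul_eq_two_mul_iff {a b : LaurentSeries (ZMod 4)} :
    2 * a = 2 * b ↔ reduceModTwo a = reduceModTwo b := by
  have key : ∀ c d : ZMod 4, 2 * c = 2 * d ↔ (c.cast : ZMod 2) = d.cast := by decide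
  simp only [HahnSeries.ext_iff, funext_iff, coeff_two_mul, HahnSeries.coeff_mapRingHom,
    ZMod.castHom_apply, key]

theorem support_two_mul (a : LaurentSeries (ZMod 4)) :
    (2 * a).support = (reduceModTwo a).support := by
  ext n
  rw [HahnSeries.mem_support, HahnSeries.mem_support, coeff_two_mul, HahnSeries.coeff_mapRingHom]
  generalize a.coeff n = c
  revert c
  decide

theorem exists_eq_two_mul_of_reduceModTwo_eq_zero {a : LaurentSeries (ZMod 4)}
    (h : reduceModTwo a = 0) : ∃ x, a = 2 * x := by
  refine ⟨a.map (⟨fun c => ((c.val / 2 : ℕ) : ZMod 4), rfl⟩ : ZeroHom (ZMod 4) (ZMod 4)), ?_⟩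
  ext n
  have hn := congrArg (HahnSeries.coeff · n) h
  simp only [HahnSeries.coeff_mapRingHom, HahnSeries.coeff_zero] at hn
  rw [coeff_two_mul, HahnSeries.map_coeff]
  generalize a.coeff n = c at hn ⊢
  revert c
  decide

theorem reduceModTwo_two : reduceModTwo 2 = 0 := by
  rw [map_ofNat, ← map_ofNat (polyToLS (ZMod 2)) 2,
    show (2 : (ZMod 2)[X]) = 0 from CharTwo.two_eq_zero, map_zero]

theorem reduceModTwo_polyToLS_ne_zero {p : (ZMod 4)[X]} (hp : p ∈ nonZeroDivisors (ZMod 4)[X]) :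
    reduceModTwo (polyToLS _ p) ≠ 0 := by
  have h2 : (2 : (ZMod 4)[X]) ≠ 0 := by
    rw [← map_ofNat C 2, Ne, C_eq_zero]
    decide
  rw [Ne, ← map_zero reduceModTwo, ← two_mul_eq_two_mul_iff, mul_zero,
    ← map_ofNat (polyToLS _) 2, ← map_mul, map_eq_zero_iff _ polyToLS_injective]
  exact fun h => h2 (mem_nonZeroDivisors_iff_right.1 hp 2 h)

end ReductionModTwo

theorem support_infinite_of_mul_eq_two {u t : LaurentSeries (ZMod 4)} {g : Fin 2 → (ZMod 4)[X]}
    {c : Fin 2} (hc : g c ∈ nonZeroDivisors (ZMod 4)[X]) (hu : ∀ j, u * polyToLS _ (g j) = 2)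
    (ht₀ : t * polyToLS _ (1 + X) = polyToLS _ (g 0))
    (ht₁ : t * polyToLS _ (3 + X) = polyToLS _ (g 1)) :
    u.support.Infinite := by
  intro hu_fin
  have hu_red : reduceModTwo u = 0 := by
    simpa [reduceModTwo_polyToLS_ne_zero hc, reduceModTwo_two] using congrArg reduceModTwo (hu c)
  obtain ⟨x, rfl⟩ := exists_eq_two_mul_of_reduceModTwo_eq_zero hu_red
  have hx : reduceModTwo x * reduceModTwo (polyToLS _ (g 0)) = 1 := by
    rw [← map_mul, ← map_one reduceModTwo, ← two_mul_eq_two_mul_iff, ← mul_assoc, hu 0, mul_one]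
  have h2t : 2 * t = polyToLS _ (g 1 - g 0) := by
    rw [map_sub, ← ht₀, ← ht₁, ← mul_sub, ← map_sub,
      show (3 + X - (1 + X) : (ZMod 4)[X]) = 2 by ring, map_ofNat, mul_comm]
  have hg₀ : reduceModTwo (polyToLS _ (g 0)) = reduceModTwo t * polyToLS _ (1 - X) := by
    rw [← ht₀, map_mul, mapRingHom_polyToLS, CharTwo.sub_eq_add]
    simp
  have hx_fin : (reduceModTwo x).support.Finite := support_two_mul x ▸ hu_fin
  have ht_fin : (reduceModTwo t).support.Finite := by
    rw [← support_two_mul, h2t]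
    exact support_polyToLS_finite _
  refine support_infinite_of_mul_one_sub_X_eq_one (a := reduceModTwo x * reduceModTwo t) ?_
    ((hx_fin.add ht_fin).subset HahnSeries.support_mul_subset)
  rw [mul_assoc, ← hg₀, hx]

/-- The free convolutional code over `ℤ/4` generated by `(1 + D, 3 + D)` is catastrophic:
every equivalent full-row-rank polynomial generator matrix admits an input of infinite
Hamming weight with output of finite Hamming weight. -/
theorem code_one_add_D_three_add_D_catastrophic :
    ∀ g : Matrix (Fin 1) (Fin 2) (Polynomial (ZMod 4)),
      FullRowRank g →
      code g = code (!![1 + Polynomial.X, 3 + Polynomial.X]) →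
      ∃ u : LaurentSeries (ZMod 4),
        u.support.Infinite ∧
          ∀ j : Fin 2, (u * polyToLS (ZMod 4) (g 0 j)).support.Finite := by
  rintro g ⟨c, hc⟩ hcode
  have h4 : (4 : (ZMod 4)[X]) = 0 := CharP.ofNat_eq_zero _ 4
  have h_two_two : (fun _ => 2) ∈ code g := by
    rw [hcode, mem_code_one_add_X_three_add_X]
    exact ⟨2 * geomSeries _, two_mul_geomSeries_mul_polyToLS (by linear_combination X * h4),
      two_mul_geomSeries_mul_polyToLS (by linear_combination (1 + X) * h4)⟩
  obtain ⟨u, hu⟩ := mem_code_fin_one_iff.1 h_two_two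
  obtain ⟨t, ht₀, ht₁⟩ := mem_code_one_add_X_three_add_X.1
    (hcode ▸ mem_code_fin_one_iff.2 ⟨1, fun j => one_mul (polyToLS _ (g 0 j))⟩)
  rw [minorOn_fin_one] at hc
  refine ⟨u, support_infinite_of_mul_eq_two hc hu ht₀ ht₁, fun j => ?_⟩
  rw [hu j, ← map_ofNat (polyToLS _) 2]
  exact support_polyToLS_finite _
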